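/- arXiv:1403.0680 — 2 statements merged into one kernel-verified Lean document; each statement's English description precedes it below -/
import Mathlib

section
/- Let k ≥ 2 be an integer, let l be any integer, and let s be an integer with 1 ≤ s ≤ k−1. Then for every α ∈ ℤ^k with η_s(α) = 0, the integer gcd(s, k−s) divides η(α); equivalently, the image η(ker η_s) is contained in the subgroup gcd(s, k−s)·ℤ of ℤ. -/
/-- `modK k i` is reduction of `i` modulo `k` taking values in `{1, …, k}`:
integers divisible by `k` are sent to `k` rather than `0`. -/
def modK (k : ℕ) (i : ℤ) : ℤ := (i - 1) % (k : ℤ) + 1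

/-- `eta k l α = Σ_{i=1}^k (l + mod_k(i)) · α_i` on `ℤ^k = (Fin k → ℤ)`,
where the `i`-th standard basis vector corresponds to the index `i ∈ {1, …, k}`. -/
def eta (k : ℕ) (l : ℤ) (α : Fin k → ℤ) : ℤ :=
  ∑ i : Fin k, (l + modK k ((i : ℤ) + 1)) * α i

/-- `etaS k l s α = Σ_{i=1}^k (l + mod_k(i + s)) · α_i`. -/
def etaS (k : ℕ) (l s : ℤ) (α : Fin k → ℤ) : ℤ :=
  ∑ i : Fin k, (l + modK k ((i : ℤ) + 1 + s)) * α i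

/-! Modulo any common divisor `d` of `s` and `k`, the shift `i ↦ i + s` inside `modK k` is
invisible, since `modK k x ≡ x [ZMOD k]`. Hence `η ≡ η_s [ZMOD d]`, and `gcd(s, k - s)` is such
a `d`. -/

theorem modK_modEq (k : ℕ) (x : ℤ) : modK k x ≡ x [ZMOD k] := by
  simpa [modK] using (Int.mod_modEq (x - 1) k).add_right 1

theorem modK_add_modEq {k : ℕ} {d s : ℤ} (hdk : d ∣ k) (hds : d ∣ s) (x : ℤ) :
    modK k (x + s) ≡ modK k x [ZMOD d] :=
  calc modK k (x + s) ≡ x + s [ZMOD d] := (modK_modEq k (x + s)).of_dvd hdk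
    _ ≡ x + 0 [ZMOD d] := Int.ModEq.add_left x ((Int.modEq_zero_iff_dvd).2 hds)
    _ = x := add_zero x
    _ ≡ modK k x [ZMOD d] := ((modK_modEq k x).of_dvd hdk).symm

theorem eta_modEq_etaS {k : ℕ} {d s : ℤ} (hdk : d ∣ k) (hds : d ∣ s) (l : ℤ) (α : Fin k → ℤ) :
    eta k l α ≡ etaS k l s α [ZMOD d] :=
  Int.ModEq.sum fun i _ =>
    ((modK_add_modEq hdk hds _).symm.add_left l).mul_right (α i)

theorem gcd_dvd_eta_of_etaS_eq_zero_general (k : ℕ) (l s : ℤ)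
    (α : Fin k → ℤ) (hα : etaS k l s α = 0) :
    (Int.gcd s ((k : ℤ) - s) : ℤ) ∣ eta k l α := by
  have hds : (Int.gcd s ((k : ℤ) - s) : ℤ) ∣ s := Int.gcd_dvd_left _ _
  have hdk : (Int.gcd s ((k : ℤ) - s) : ℤ) ∣ k := by
    simpa using dvd_add hds (Int.gcd_dvd_right s ((k : ℤ) - s))
  rw [← Int.modEq_zero_iff_dvd, ← hα]
  exact eta_modEq_etaS hdk hds l α

/-- The inclusion direction of the Claim in Mashiko's proof: for `k ≥ 2`, any `l`,
and `1 ≤ s ≤ k − 1`, if `η_s(α) = 0` then `gcd(s, k−s)` divides `η(α)`. -/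
theorem gcd_dvd_eta_of_etaS_eq_zero (k : ℕ) (hk : 2 ≤ k) (l s : ℤ)
    (hs1 : 1 ≤ s) (hs2 : s ≤ (k : ℤ) - 1) (α : Fin k → ℤ) (hα : etaS k l s α = 0) :
    (Int.gcd s ((k : ℤ) - s) : ℤ) ∣ eta k l α :=
  gcd_dvd_eta_of_etaS_eq_zero_general k l s α hα
end

section
/- Let k ≥ 2 be an integer, let l be any integer, and let s be an integer with 1 ≤ s ≤ k−1. For an integer j with 1 ≤ j ≤ k−1 and j ≠ k−s, define β_j := (l + mod_k(j+s+1))·e_j − (l + mod_k(j+s))·e_{j+1} ∈ ℤ^k. Then η_s(β_j) = 0, and moreover η(β_j) = −s if j < k−s, while η(β_j) = k−s if j > k−s. -/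
/-- `betaJ k l s j` is the element
`β_j = (l + mod_k(j+s+1))·e_j − (l + mod_k(j+s))·e_{j+1}` of `ℤ^k`,
where `e_j` is the `j`-th standard basis vector (`1`-based indexing, so the
coordinate `i : Fin k` corresponds to the index `i + 1 ∈ {1, …, k}`). -/
def betaJ (k : ℕ) (l s : ℤ) (j : ℕ) : Fin k → ℤ := fun i =>
  if (i : ℕ) + 1 = j then l + modK k ((j : ℤ) + s + 1)
  else if (i : ℕ) + 1 = j + 1 then -(l + modK k ((j : ℤ) + s))
  else 0

lemma modK_eq_self {k : ℕ} {m : ℤ} (h1 : 1 ≤ m) (h2 : m ≤ k) : modK k m = m := by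
  rw [modK, Int.emod_eq_of_lt (by omega) (by omega)]
  omega

lemma modK_eq_sub_self {k : ℕ} {m : ℤ} (h1 : (k : ℤ) < m) (h2 : m ≤ 2 * k) :
    modK k m = m - k := by
  rw [modK, Int.emod_eq_sub_self_emod, Int.emod_eq_of_lt (by omega) (by omega)]
  omega

section
variable {k : ℕ} {l s : ℤ} {j : ℕ}

lemma betaJ_eq_sub_single (hj1 : 1 ≤ j) (hjk : j < k) :
    betaJ k l s j = Pi.single ⟨j - 1, by omega⟩ (l + modK k (j + s + 1))
      - Pi.single ⟨j, hjk⟩ (l + modK k (j + s)) := by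
  ext i
  simp only [betaJ, Pi.sub_apply, Pi.single_apply, Fin.ext_iff]
  split_ifs <;> omega

lemma sum_mul_betaJ (w : ℤ → ℤ) (hj1 : 1 ≤ j) (hjk : j < k) :
    ∑ i : Fin k, w ((i : ℤ) + 1) * betaJ k l s j i
      = w j * (l + modK k (j + s + 1)) - w (j + 1) * (l + modK k (j + s)) := by
  simp only [betaJ_eq_sub_single hj1 hjk, Pi.sub_apply, mul_sub, Finset.sum_sub_distrib,
    Pi.single_apply, mul_ite, mul_zero, Finset.sum_ite_eq', Finset.mem_univ, if_true]
  push_cast [Nat.cast_sub hj1]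
  ring_nf

lemma etaS_betaJ (hj1 : 1 ≤ j) (hjk : j < k) : etaS k l s (betaJ k l s j) = 0 := by
  rw [etaS, sum_mul_betaJ (fun m => l + modK k (m + s)) hj1 hjk, add_right_comm]
  ring

lemma eta_betaJ_of_modK_eq (c : ℤ) (hj1 : 1 ≤ j) (hjk : j < k)
    (h₀ : modK k (j + s) = j + s + c) (h₁ : modK k (j + s + 1) = j + s + 1 + c) :
    eta k l (betaJ k l s j) = -(s + c) := by
  rw [eta, sum_mul_betaJ (fun m => l + modK k m) hj1 hjk, h₀, h₁,
    modK_eq_self (by omega) (by omega), modK_eq_self (by omega) (by omega)]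
  ring
end

theorem etaS_betaJ_eq_zero_and_eta_betaJ_general (k : ℕ) (l s : ℤ)
    (hs1 : 1 ≤ s) (hs2 : s ≤ (k : ℤ) - 1) (j : ℕ) (hj1 : 1 ≤ j) (hj2 : j ≤ k - 1) :
    etaS k l s (betaJ k l s j) = 0 ∧
    ((j : ℤ) < (k : ℤ) - s → eta k l (betaJ k l s j) = -s) ∧
    ((k : ℤ) - s < (j : ℤ) → eta k l (betaJ k l s j) = (k : ℤ) - s) := by
  have hjk : j < k := by omega
  refine ⟨etaS_betaJ hj1 hjk, fun hlt => ?_, fun hgt => ?_⟩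
  · rw [eta_betaJ_of_modK_eq 0 hj1 hjk]
    · ring
    · rw [modK_eq_self (by omega) (by omega)]; ring
    · rw [modK_eq_self (by omega) (by omega)]; ring
  · rw [eta_betaJ_of_modK_eq (-k) hj1 hjk]
    · ring
    · rw [modK_eq_sub_self (by omega) (by omega)]; ring
    · rw [modK_eq_sub_self (by omega) (by omega)]; ring

/-- The elements `β_j` constructed in the proof of the Claim in Mashiko's paper:
for `k ≥ 2`, any `l`, `1 ≤ s ≤ k − 1`, and `1 ≤ j ≤ k − 1` with `j ≠ k − s`,
one has `η_s(β_j) = 0`; moreover `η(β_j) = −s` if `j < k − s` and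
`η(β_j) = k − s` if `j > k − s`. -/
theorem etaS_betaJ_eq_zero_and_eta_betaJ (k : ℕ) (hk : 2 ≤ k) (l s : ℤ)
    (hs1 : 1 ≤ s) (hs2 : s ≤ (k : ℤ) - 1) (j : ℕ) (hj1 : 1 ≤ j) (hj2 : j ≤ k - 1)
    (hjs : (j : ℤ) ≠ (k : ℤ) - s) :
    etaS k l s (betaJ k l s j) = 0 ∧
    ((j : ℤ) < (k : ℤ) - s → eta k l (betaJ k l s j) = -s) ∧
    ((k : ℤ) - s < (j : ℤ) → eta k l (betaJ k l s j) = (k : ℤ) - s) :=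
  etaS_betaJ_eq_zero_and_eta_betaJ_general k l s hs1 hs2 j hj1 hj2
end
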